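/- arXiv:2405.04987 — 4 statements merged into one kernel-verified Lean document; each statement's English description precedes it below -/
import Mathlib

section
/- With q := 1 − exp(−4‖c‖_∞/ε) ∈ (0,1), the operator K_μ satisfies the contraction bound (1/2)·(sup_X K_μφ − inf_X K_μφ) ≤ q · (1/2)·(sup_X φ − inf_X φ) for every continuous function φ : X → ℝ; equivalently, ‖K_μφ‖_{C/ℝ} ≤ q·‖φ‖_{C/ℝ}, where ‖ψ‖_{C/ℝ} = inf_{λ∈ℝ} ‖ψ − λ‖_∞ = (1/2)(sup ψ − inf ψ). -/
open MeasureTheory Real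

/-!
The kernel `k_μ` is bounded below by `δ = exp (-4‖c‖_∞/ε)`, because `f ≥ -(3/2)‖c‖_∞` and
`c ≤ ‖c‖_∞`, and each `k_μ(·, y)` is a probability density by the Schrödinger equation. Writing
`k_μ(·, y) = δ + (k_μ(·, y) - δ)` splits `K_μφ(y)` into the `y`-independent part `δ ∫ φ dμ` and
an integral of `φ` against the nonnegative density `k_μ(·, y) - δ` of total mass `1 - δ`, which
lies between `(1 - δ) inf φ` and `(1 - δ) sup φ`. Hence the oscillation of `K_μφ` is at most
`(1 - δ)` times that of `φ` (Doeblin's minorization argument).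
-/

section DoeblinMinorization

variable {X : Type*} [MeasurableSpace X] {μ : Measure X} {φ g : X → ℝ} {δ m M : ℝ}

theorem integrable_of_mem_Icc [IsFiniteMeasure μ] (hφ : AEStronglyMeasurable φ μ)
    (hm : ∀ x, m ≤ φ x) (hM : ∀ x, φ x ≤ M) : Integrable φ μ :=
  .of_bound hφ (max |m| |M|) (.of_forall fun x => abs_le_max_abs_abs (hm x) (hM x))

theorem integrable_mul_density_of_mem_Icc (hφ : AEStronglyMeasurable φ μ)
    (hm : ∀ x, m ≤ φ x) (hM : ∀ x, φ x ≤ M) (hg : ∫ x, g x ∂μ = 1) :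
    Integrable (fun x => φ x * g x) μ :=
  -- `g` is integrable since the Bochner integral of a non-integrable function is `0`.
  (Integrable.of_integral_ne_zero (hg ▸ one_ne_zero)).bdd_mul hφ
    (.of_forall fun x => abs_le_max_abs_abs (hm x) (hM x))

variable [IsProbabilityMeasure μ]

theorem integral_mul_density_le (hφ : AEStronglyMeasurable φ μ) (hm : ∀ x, m ≤ φ x)
    (hM : ∀ x, φ x ≤ M) (hg : ∫ x, g x ∂μ = 1) (hδ : ∀ x, δ ≤ g x) :
    ∫ x, φ x * g x ∂μ ≤ δ * ∫ x, φ x ∂μ + M * (1 - δ) := by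
  have hg_int : Integrable g μ := .of_integral_ne_zero (hg ▸ one_ne_zero)
  have hφ_int : Integrable φ μ := integrable_of_mem_Icc hφ hm hM
  have hgδ_int : Integrable (fun x => g x - δ) μ := hg_int.sub (integrable_const δ)
  calc ∫ x, φ x * g x ∂μ ≤ ∫ x, δ * φ x + M * (g x - δ) ∂μ := by
        refine integral_mono (integrable_mul_density_of_mem_Icc hφ hm hM hg)
          ((hφ_int.const_mul δ).add (hgδ_int.const_mul M)) fun x => ?_
        nlinarith [hδ x, hM x]
    _ = δ * ∫ x, φ x ∂μ + M * (1 - δ) := by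
        rw [integral_add (hφ_int.const_mul δ) (hgδ_int.const_mul M),
          integral_const_mul, integral_const_mul, integral_sub hg_int (integrable_const δ), hg,
          integral_const, probReal_univ, one_smul]

theorem le_integral_mul_density (hφ : AEStronglyMeasurable φ μ) (hm : ∀ x, m ≤ φ x)
    (hM : ∀ x, φ x ≤ M) (hg : ∫ x, g x ∂μ = 1) (hδ : ∀ x, δ ≤ g x) :
    δ * ∫ x, φ x ∂μ + m * (1 - δ) ≤ ∫ x, φ x * g x ∂μ := by
  have h := integral_mul_density_le (φ := fun x => -φ x) hφ.neg (fun x => neg_le_neg (hM x))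
    (fun x => neg_le_neg (hm x)) hg hδ
  simp only [neg_mul, integral_neg] at h
  linarith

theorem iSup_sub_iInf_integral_mul_density_le {ι : Type*} [Nonempty ι] {g : ι → X → ℝ}
    (hφ : AEStronglyMeasurable φ μ) (hm : ∀ x, m ≤ φ x) (hM : ∀ x, φ x ≤ M)
    (hg : ∀ i, ∫ x, g i x ∂μ = 1) (hδ : ∀ i x, δ ≤ g i x) :
    (⨆ i, ∫ x, φ x * g i x ∂μ) - ⨅ i, ∫ x, φ x * g i x ∂μ ≤ (1 - δ) * (M - m) := by
  have h_sup := ciSup_le fun i => integral_mul_density_le hφ hm hM (hg i) (hδ i)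
  have h_inf := le_ciInf fun i => le_integral_mul_density hφ hm hM (hg i) (hδ i)
  linarith

end DoeblinMinorization

theorem stmt1_general {X : Type*} [MetricSpace X] [CompactSpace X] [Nonempty X]
    [MeasurableSpace X] [BorelSpace X]
    (ε : ℝ) (hε : 0 < ε) (c : X → X → ℝ)
    (hc_cont : Continuous fun p : X × X => c p.1 p.2)
    (μ : Measure X) [IsProbabilityMeasure μ]
    (f : X → ℝ)
    (hf_bound : ∀ x, |f x| ≤ (3 / 2) * ⨆ p : X × X, c p.1 p.2)
    (hfp : ∀ y, ∫ x, exp ((f x + f y - c x y) / ε) ∂μ = 1)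
    (φ : X → ℝ) (hφ : Continuous φ) :
    (1 / 2) * ((⨆ y, ∫ x, φ x * exp ((f x + f y - c x y) / ε) ∂μ)
        - ⨅ y, ∫ x, φ x * exp ((f x + f y - c x y) / ε) ∂μ)
      ≤ (1 - exp (-(4 * ⨆ p : X × X, c p.1 p.2) / ε))
        * ((1 / 2) * ((⨆ x, φ x) - ⨅ x, φ x)) := by
  set C := ⨆ p : X × X, c p.1 p.2
  have hc_le : ∀ x y, c x y ≤ C := fun x y => le_ciSup (isCompact_range hc_cont).bddAbove (x, y)
  have h_kernel_ge : ∀ y x, exp (-(4 * C) / ε) ≤ exp ((f x + f y - c x y) / ε) := by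
    intro y x
    gcongr
    linarith [(abs_le.mp (hf_bound x)).1, (abs_le.mp (hf_bound y)).1, hc_le x y]
  have h_osc := iSup_sub_iInf_integral_mul_density_le hφ.aestronglyMeasurable
    (fun x => ciInf_le (isCompact_range hφ).bddBelow x)
    (fun x => le_ciSup (isCompact_range hφ).bddAbove x) hfp h_kernel_ge
  linarith

/-- **Contraction property of the self-transport kernel operator `K_μ`.**
With `q = 1 − exp(−4‖c‖_∞/ε) ∈ (0,1)` one has
`(1/2)·(sup K_μφ − inf K_μφ) ≤ q · (1/2)·(sup φ − inf φ)` for every continuous `φ`,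
i.e. `‖K_μφ‖_{C/ℝ} ≤ q·‖φ‖_{C/ℝ}`. Here `K_μφ(y) = ∫ φ(x)·k_μ(x,y) dμ(x)` with
`k_μ(x,y) = exp((f(x)+f(y)−c(x,y))/ε)`, where `f` is the entropic self-transport
potential of the probability measure `μ`. -/
theorem stmt1 {X : Type*} [MetricSpace X] [CompactSpace X] [Nonempty X]
    [MeasurableSpace X] [BorelSpace X]
    (ε : ℝ) (hε : 0 < ε) (c : X → X → ℝ)
    (hc_cont : Continuous fun p : X × X => c p.1 p.2)
    (hc_symm : ∀ x y, c x y = c y x) (hc_nonneg : ∀ x y, 0 ≤ c x y)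
    (μ : Measure X) [IsProbabilityMeasure μ]
    (f : X → ℝ) (hf_cont : Continuous f)
    (hf_bound : ∀ x, |f x| ≤ (3 / 2) * ⨆ p : X × X, c p.1 p.2)
    (hfp : ∀ y, ∫ x, exp ((f x + f y - c x y) / ε) ∂μ = 1)
    (φ : X → ℝ) (hφ : Continuous φ) :
    (1 / 2) * ((⨆ y, ∫ x, φ x * exp ((f x + f y - c x y) / ε) ∂μ)
        - ⨅ y, ∫ x, φ x * exp ((f x + f y - c x y) / ε) ∂μ)
      ≤ (1 - exp (-(4 * ⨆ p : X × X, c p.1 p.2) / ε))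
        * ((1 / 2) * ((⨆ x, φ x) - ⨅ x, φ x)) :=
  stmt1_general ε hε c hc_cont μ f hf_bound hfp φ hφ
end

section
/- For all r, s ∈ [0,∞), the entropic optimal transport cost between the symmetric two-point measures μ_r and μ_s on ℝ with quadratic cost equals OT_ε(μ_r, μ_s) = ε·( log 2 − log( k_c(r,s) + k_c(r,−s) ) ), where k_c(x,y) = exp(−(x−y)²/ε). -/
open MeasureTheory Filter Topology Real
open scoped ENNReal

noncomputable section

/-- `γ` is a coupling of `μ` and `ν`: its marginals are `μ` and `ν`. -/
def IsCoupling {X : Type*} [MeasurableSpace X] (μ ν : Measure X) (γ : Measure (X × X)) : Prop :=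
  γ.map Prod.fst = μ ∧ γ.map Prod.snd = ν

/-- The entropic optimal transport cost
`OT_ε(μ,ν) = inf_{γ ∈ Π(μ,ν)} ∫ c dγ + ε·KL(γ | μ⊗ν)`,
where the infimum is (equivalently) taken over the couplings with finite
Kullback–Leibler divergence `KL(γ | μ⊗ν) = ∫ log(dγ/d(μ⊗ν)) dγ`
(couplings with `KL = +∞` do not contribute to the infimum). -/
noncomputable def entOT {X : Type*} [MeasurableSpace X] (ε : ℝ) (c : X → X → ℝ)
    (μ ν : Measure X) : ℝ :=
  sInf { v : ℝ | ∃ γ : Measure (X × X), IsProbabilityMeasure γ ∧ IsCoupling μ ν γ ∧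
    γ ≪ μ.prod ν ∧
    Integrable (fun p => Real.log ((γ.rnDeriv (μ.prod ν)) p).toReal) γ ∧
    v = (∫ p, c p.1 p.2 ∂γ) + ε * ∫ p, Real.log ((γ.rnDeriv (μ.prod ν)) p).toReal ∂γ }

/-- The Sinkhorn divergence
`S_ε(μ,ν) = OT_ε(μ,ν) − (1/2)·OT_ε(μ,μ) − (1/2)·OT_ε(ν,ν)`. -/
noncomputable def sinkhorn {X : Type*} [MeasurableSpace X] (ε : ℝ) (c : X → X → ℝ)
    (μ ν : Measure X) : ℝ :=
  entOT ε c μ ν - (1 / 2) * entOT ε c μ μ - (1 / 2) * entOT ε c ν ν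

/-- The symmetric two-point measure `μ_r = (1/2)δ_r + (1/2)δ_{−r}` on `ℝ`. -/
noncomputable def mu2 (r : ℝ) : Measure ℝ :=
  ((1 : ℝ≥0∞) / 2) • Measure.dirac r + ((1 : ℝ≥0∞) / 2) • Measure.dirac (-r)

/-- The quadratic cost on `ℝ`. -/
noncomputable def c2 : ℝ → ℝ → ℝ := fun x y => (x - y) ^ 2

/-- The Gaussian kernel `k_c(x,y) = exp(−(x−y)²/ε)`. -/
noncomputable def kc (ε x y : ℝ) : ℝ := Real.exp (-(x - y) ^ 2 / ε)

/-!
Gibbs variational principle: for every probability measure `γ ≪ ρ`,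
`∫ c dγ + ε·KL(γ | ρ) ≥ -ε log ∫ exp(-c/ε) dρ`, since the difference is `ε` times
`KL(γ | ρ.tilted (-c/ε)) ≥ 0`, and equality holds at the Gibbs measure `ρ.tilted (-c/ε)`.
So if the Gibbs measure of `ρ = μ ⊗ ν` is a coupling of `μ` and `ν`, it is optimal and
`OT_ε(μ, ν) = -ε log ∫ exp(-c/ε) d(μ ⊗ ν)`. For `μ_r ⊗ μ_s` this is the case because
`k_c(-x, y) = k_c(x, -y)`: every row and every column of the Gibbs density has the same sum
`k_c(r, s) + k_c(r, -s)`.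
-/

namespace MeasureTheory

open InformationTheory

variable {α : Type*} [MeasurableSpace α]

def freeEnergy (ε : ℝ) (c : α → ℝ) (ρ : Measure α) : ℝ :=
  -ε * log (∫ x, exp (-c x / ε) ∂ρ)

theorem freeEnergy_le_integral_add_mul_integral_llr {ε : ℝ} (hε : 0 < ε) {c : α → ℝ}
    {ρ γ : Measure α} [IsProbabilityMeasure ρ] [IsProbabilityMeasure γ] (hγρ : γ ≪ ρ)
    (hc : Integrable c γ) (hexp : Integrable (fun x ↦ exp (-c x / ε)) ρ)
    (hllr : Integrable (llr γ ρ) γ) :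
    freeEnergy ε c ρ ≤ ∫ x, c x ∂γ + ε * ∫ x, llr γ ρ x ∂γ := by
  have hf : Integrable (fun x ↦ -c x / ε) γ := hc.neg.div_const ε
  have : IsProbabilityMeasure (ρ.tilted fun x ↦ -c x / ε) := isProbabilityMeasure_tilted hexp
  have hgibbs := integral_llr_add_sub_measure_univ_nonneg
    (hγρ.trans (absolutelyContinuous_tilted hexp))
    (integrable_llr_tilted_right hγρ hf hllr hexp)
  rw [integral_llr_tilted_right hγρ hf hexp hllr, integral_div, integral_neg] at hgibbs
  simp only [probReal_univ, add_sub_cancel_right] at hgibbs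
  have h := mul_nonneg hε.le hgibbs
  rw [mul_add, mul_sub, mul_div_cancel₀ _ hε.ne'] at h
  rw [freeEnergy]
  linarith

theorem llr_tilted_self_ae_eq {ρ : Measure α} [SigmaFinite ρ] {f : α → ℝ}
    (hf : Integrable (fun x ↦ exp (f x)) ρ) :
    llr (ρ.tilted f) ρ =ᵐ[ρ.tilted f] fun x ↦ f x - log (∫ x, exp (f x) ∂ρ) :=
  (tilted_absolutelyContinuous ρ f).ae_le (log_rnDeriv_tilted_left_self hf)

theorem integral_add_mul_integral_llr_tilted {ε : ℝ} (hε : ε ≠ 0) {c : α → ℝ}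
    {ρ : Measure α} [IsProbabilityMeasure ρ]
    (hc : Integrable c (ρ.tilted fun x ↦ -c x / ε))
    (hexp : Integrable (fun x ↦ exp (-c x / ε)) ρ) :
    ∫ x, c x ∂(ρ.tilted fun x ↦ -c x / ε)
      + ε * ∫ x, llr (ρ.tilted fun x ↦ -c x / ε) ρ x ∂(ρ.tilted fun x ↦ -c x / ε)
      = freeEnergy ε c ρ := by
  have : IsProbabilityMeasure (ρ.tilted fun x ↦ -c x / ε) := isProbabilityMeasure_tilted hexp
  have hf : Integrable (fun x ↦ -c x / ε) (ρ.tilted fun x ↦ -c x / ε) := hc.neg.div_const ε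
  rw [integral_congr_ae (llr_tilted_self_ae_eq hexp), integral_sub hf (integrable_const _),
    integral_div, integral_neg, integral_const, probReal_univ, one_smul, freeEnergy]
  field_simp
  ring

section Marginals

variable {X Y : Type*} [MeasurableSpace X] [MeasurableSpace Y] (μ : Measure X) (ν : Measure Y)
  [SFinite μ] [SFinite ν] {h : X × Y → ℝ≥0∞}

theorem map_fst_withDensity_prod (hh : Measurable h) :
    ((μ.prod ν).withDensity h).map Prod.fst =
      μ.withDensity fun x ↦ ∫⁻ y, h (x, y) ∂ν := by
  ext s hs
  rw [Measure.map_apply measurable_fst hs, withDensity_apply _ (measurable_fst hs),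
    withDensity_apply _ hs, ← Set.prod_univ, setLIntegral_prod _ hh.aemeasurable,
    Measure.restrict_univ]

theorem map_snd_withDensity_prod (hh : Measurable h) :
    ((μ.prod ν).withDensity h).map Prod.snd =
      ν.withDensity fun y ↦ ∫⁻ x, h (x, y) ∂μ := by
  ext s hs
  rw [Measure.map_apply measurable_snd hs, withDensity_apply _ (measurable_snd hs),
    withDensity_apply _ hs, ← Set.univ_prod, setLIntegral_prod_symm _ hh.aemeasurable,
    Measure.restrict_univ]

end Marginals

end MeasureTheory

open MeasureTheory

theorem entOT_eq_freeEnergy_of_isCoupling_tilted {X : Type*} [MeasurableSpace X] {ε C : ℝ}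
    (hε : 0 < ε) {c : X → X → ℝ} {μ ν : Measure X} [IsProbabilityMeasure μ]
    [IsProbabilityMeasure ν]
    (hc_meas : AEStronglyMeasurable (fun p : X × X ↦ c p.1 p.2) (μ.prod ν))
    (hc_bdd : ∀ᵐ p ∂μ.prod ν, |c p.1 p.2| ≤ C)
    (hcpl : IsCoupling μ ν ((μ.prod ν).tilted fun p ↦ -c p.1 p.2 / ε)) :
    entOT ε c μ ν = freeEnergy ε (fun p ↦ c p.1 p.2) (μ.prod ν) := by
  have hc_int : ∀ γ : Measure (X × X), IsFiniteMeasure γ → γ ≪ μ.prod ν →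
      Integrable (fun p ↦ c p.1 p.2) γ := fun γ _ hγ ↦
    .of_bound (hc_meas.mono_ac hγ) C (hγ.ae_le hc_bdd)
  have hexp : Integrable (fun p : X × X ↦ exp (-c p.1 p.2 / ε)) (μ.prod ν) := by
    refine .of_bound (measurable_exp.comp_aemeasurable
      (hc_meas.aemeasurable.neg.div_const ε)).aestronglyMeasurable (exp (C / ε)) ?_
    filter_upwards [hc_bdd] with p hp
    rw [norm_of_nonneg (exp_pos _).le, exp_le_exp, neg_div, neg_le, ← neg_div]
    exact div_le_div_of_nonneg_right (neg_le_of_abs_le hp) hε.le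
  have hgibbs_prob : IsProbabilityMeasure ((μ.prod ν).tilted fun p ↦ -c p.1 p.2 / ε) :=
    isProbabilityMeasure_tilted hexp
  have hgibbs_ac := tilted_absolutelyContinuous (μ.prod ν) fun p ↦ -c p.1 p.2 / ε
  have hc_gibbs := hc_int _ inferInstance hgibbs_ac
  refine IsLeast.csInf_eq ⟨⟨_, hgibbs_prob, hcpl, hgibbs_ac, ?_,
    (integral_add_mul_integral_llr_tilted hε.ne' hc_gibbs hexp).symm⟩, ?_⟩
  · exact ((hc_gibbs.neg.div_const ε).sub (integrable_const _)).congr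
      (llr_tilted_self_ae_eq hexp).symm
  · rintro _ ⟨γ, hγ, -, hγρ, hllr, rfl⟩
    exact freeEnergy_le_integral_add_mul_integral_llr hε hγρ (hc_int γ inferInstance hγρ)
      hexp hllr

instance (r : ℝ) : IsProbabilityMeasure (mu2 r) := by
  constructor
  simp [mu2, ENNReal.inv_two_add_inv_two]

theorem ae_mu2 (r : ℝ) : ∀ᵐ x ∂mu2 r, x = r ∨ x = -r := by
  simp only [mu2, ae_add_measure_iff]
  exact ⟨Measure.ae_smul_measure (by simp [ae_dirac_eq]) _,
    Measure.ae_smul_measure (by simp [ae_dirac_eq]) _⟩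

theorem integrable_mu2 (r : ℝ) (f : ℝ → ℝ) : Integrable f (mu2 r) :=
  (integrable_dirac (by simp)).smul_measure (by simp) |>.add_measure
    ((integrable_dirac (by simp)).smul_measure (by simp))

theorem lintegral_mu2 (r : ℝ) (f : ℝ → ℝ≥0∞) :
    ∫⁻ x, f x ∂mu2 r = (f r + f (-r)) / 2 := by
  simp [mu2, lintegral_add_measure, ENNReal.div_eq_inv_mul, mul_add]

theorem integral_mu2 (r : ℝ) (f : ℝ → ℝ) : ∫ x, f x ∂mu2 r = (f r + f (-r)) / 2 := by
  rw [mu2, integral_add_measure ((integrable_dirac (by simp)).smul_measure (by simp))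
    ((integrable_dirac (by simp)).smul_measure (by simp))]
  simp only [integral_smul_measure, integral_dirac, ENNReal.toReal_div, ENNReal.toReal_one,
    ENNReal.toReal_ofNat, smul_eq_mul]
  ring

theorem kc_pos (ε x y : ℝ) : 0 < kc ε x y := exp_pos _

theorem exp_neg_c2_div (ε x y : ℝ) : exp (-c2 x y / ε) = kc ε x y := rfl

theorem kc_neg_left (ε x y : ℝ) : kc ε (-x) y = kc ε x (-y) := by
  simp only [kc]
  ring_nf

theorem continuous_c2 : Continuous fun p : ℝ × ℝ ↦ c2 p.1 p.2 :=
  (continuous_fst.sub continuous_snd).pow 2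

theorem ae_abs_c2_le (r s : ℝ) :
    ∀ᵐ p ∂(mu2 r).prod (mu2 s), |c2 p.1 p.2| ≤ (|r| + |s|) ^ 2 := by
  filter_upwards [Measure.quasiMeasurePreserving_fst.ae (ae_mu2 r),
    Measure.quasiMeasurePreserving_snd.ae (ae_mu2 s)] with p hx hy
  rw [c2, abs_sq, ← sq_abs, ← abs_eq_abs.2 hx, ← abs_eq_abs.2 hy]
  exact pow_le_pow_left₀ (abs_nonneg _) (abs_sub _ _) 2

theorem integral_exp_neg_c2_div (ε r s : ℝ) :
    ∫ p, exp (-c2 p.1 p.2 / ε) ∂(mu2 r).prod (mu2 s) = (kc ε r s + kc ε r (-s)) / 2 := by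
  have hcont : Continuous fun p : ℝ × ℝ ↦ exp (-c2 p.1 p.2 / ε) :=
    continuous_exp.comp (continuous_c2.neg.div_const ε)
  have hint : Integrable (fun p : ℝ × ℝ ↦ exp (-c2 p.1 p.2 / ε)) ((mu2 r).prod (mu2 s)) :=
    (integrable_prod_iff hcont.aestronglyMeasurable).2
      ⟨.of_forall fun _ ↦ integrable_mu2 _ _, integrable_mu2 _ _⟩
  rw [integral_prod _ hint]
  simp only [integral_mu2, exp_neg_c2_div, kc_neg_left, neg_neg]
  ring

theorem isCoupling_mu2_tilted (ε r s : ℝ) :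
    IsCoupling (mu2 r) (mu2 s) (((mu2 r).prod (mu2 s)).tilted fun p ↦ -c2 p.1 p.2 / ε) := by
  set Z := kc ε r s + kc ε r (-s)
  have hZ : 0 < Z := add_pos (kc_pos _ _ _) (kc_pos _ _ _)
  have hden : ∀ x y, ENNReal.ofReal (exp (-c2 x y / ε) /
      ∫ p, exp (-c2 p.1 p.2 / ε) ∂(mu2 r).prod (mu2 s)) =
        ENNReal.ofReal (2 * kc ε x y / Z) := by
    intro x y
    rw [integral_exp_neg_c2_div, exp_neg_c2_div, div_div_eq_mul_div, mul_comm]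
  have hsum : ∀ {x y x' y'}, kc ε x y + kc ε x' y' = Z →
      (ENNReal.ofReal (2 * kc ε x y / Z) + ENNReal.ofReal (2 * kc ε x' y' / Z)) / 2 = 1 := by
    intro x y x' y' h
    rw [← ENNReal.ofReal_add (by have := kc_pos ε x y; positivity)
      (by have := kc_pos ε x' y'; positivity), ← add_div, ← mul_add, h,
      mul_div_cancel_right₀ _ hZ.ne', ENNReal.ofReal_ofNat,
      ENNReal.div_self two_ne_zero ENNReal.ofNat_ne_top]
  have hmeas : Measurable fun p : ℝ × ℝ ↦ ENNReal.ofReal (exp (-c2 p.1 p.2 / ε) /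
      ∫ p, exp (-c2 p.1 p.2 / ε) ∂(mu2 r).prod (mu2 s)) :=
    ((continuous_exp.comp (continuous_c2.neg.div_const ε)).div_const _).measurable.ennreal_ofReal
  constructor
  · rw [Measure.tilted, map_fst_withDensity_prod _ _ hmeas]
    conv_rhs => rw [← withDensity_one (μ := mu2 r)]
    refine withDensity_congr_ae ?_
    filter_upwards [ae_mu2 r] with x hx
    simp only [lintegral_mu2, hden, Pi.one_apply]
    rcases hx with rfl | rfl
    · exact hsum rfl
    · exact hsum (by rw [kc_neg_left, kc_neg_left, neg_neg, add_comm])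
  · rw [Measure.tilted, map_snd_withDensity_prod _ _ hmeas]
    conv_rhs => rw [← withDensity_one (μ := mu2 s)]
    refine withDensity_congr_ae ?_
    filter_upwards [ae_mu2 s] with y hy
    simp only [lintegral_mu2, hden, Pi.one_apply]
    rcases hy with rfl | rfl
    · exact hsum (by rw [kc_neg_left])
    · exact hsum (by rw [kc_neg_left, neg_neg, add_comm])

theorem stmt4_general (ε : ℝ) (hε : 0 < ε) (r s : ℝ) :
    entOT ε c2 (mu2 r) (mu2 s)
      = ε * (Real.log 2 - Real.log (kc ε r s + kc ε r (-s))) := by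
  rw [entOT_eq_freeEnergy_of_isCoupling_tilted hε continuous_c2.aestronglyMeasurable
    (ae_abs_c2_le r s) (isCoupling_mu2_tilted ε r s), freeEnergy, integral_exp_neg_c2_div,
    log_div (add_pos (kc_pos _ _ _) (kc_pos _ _ _)).ne' two_ne_zero]
  ring

/-- **Entropic cost between symmetric two-point measures.** For `r, s ≥ 0`,
`OT_ε(μ_r, μ_s) = ε·(log 2 − log(k_c(r,s) + k_c(r,−s)))`. -/
theorem stmt4 (ε : ℝ) (hε : 0 < ε) (r s : ℝ) (hr : 0 ≤ r) (hs : 0 ≤ s) :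
    entOT ε c2 (mu2 r) (mu2 s)
      = ε * (Real.log 2 - Real.log (kc ε r s + kc ε r (-s))) :=
  stmt4_general ε hε r s
end
end

section
/- Let μ₀, μ₁ be compactly supported Borel probability measures on ℝ^d with means m₀, m₁ and centered versions μ̄₀, μ̄₁, and take the quadratic cost c(x,y) = ‖x−y‖². Then for every ε > 0 the Sinkhorn divergence decomposes as S_ε(μ₀, μ₁) = ‖m₁ − m₀‖² + S_ε(μ̄₀, μ̄₁). -/
/-!
Translating the marginals, `(x, y) ↦ (x - a, y - b)`, is a measurable bijection of `X × X`: it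
maps couplings to couplings and preserves the relative entropy with respect to the product of the
marginals. For the quadratic cost it turns `‖x - y‖²` into `‖x - y‖² + φ x + ψ y` with
`φ x = ‖w‖² - 2⟪w, x⟫`, `ψ y = 2⟪w, y⟫` and `w = a - b`. A separable term integrates to the same
value against every coupling, so `OT_ε` is shifted by `‖w‖² - 2⟪m(μ) - m(ν), w⟫`. Centering both
measures, this shift is `-‖m₀ - m₁‖²` for `OT_ε(μ₀, μ₁)` and `0` for the two self terms.
-/

open MeasureTheory Filter Topology Real
open scoped ENNReal

noncomputable section

/-- The mean `m(μ) = ∫ x dμ(x)` of a measure on `ℝ^d`. -/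
noncomputable def meanOf {d : ℕ} (μ : Measure (EuclideanSpace ℝ (Fin d))) :
    EuclideanSpace ℝ (Fin d) :=
  ∫ x, x ∂μ

/-- The centered version `μ̄` of `μ`: the pushforward of `μ` under `x ↦ x − m(μ)`. -/
noncomputable def centered {d : ℕ} (μ : Measure (EuclideanSpace ℝ (Fin d))) :
    Measure (EuclideanSpace ℝ (Fin d)) :=
  μ.map fun x => x - meanOf μ

/-- The quadratic cost on `ℝ^d`. -/
noncomputable def cQuad {d : ℕ} : EuclideanSpace ℝ (Fin d) → EuclideanSpace ℝ (Fin d) → ℝ :=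
  fun x y => ‖x - y‖ ^ 2

open scoped RealInnerProductSpace

section MeasurableEquiv

variable {X Y : Type*} [MeasurableSpace X] [MeasurableSpace Y]

def IsFiniteKLCoupling (μ ν : Measure X) (γ : Measure (X × X)) : Prop :=
  IsProbabilityMeasure γ ∧ IsCoupling μ ν γ ∧ γ ≪ μ.prod ν ∧ Integrable (llr γ (μ.prod ν)) γ

def entCost (ε : ℝ) (c : X → X → ℝ) (μ ν : Measure X) (γ : Measure (X × X)) : ℝ :=
  ∫ p, c p.1 p.2 ∂γ + ε * ∫ p, llr γ (μ.prod ν) p ∂γ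

lemma entOT_eq_sInf_image (ε : ℝ) (c : X → X → ℝ) (μ ν : Measure X) :
    entOT ε c μ ν = sInf (entCost ε c μ ν '' {γ | IsFiniteKLCoupling μ ν γ}) := by
  unfold entOT
  congr 1
  ext v
  simp only [Set.mem_image, Set.mem_ofPred_eq, IsFiniteKLCoupling, entCost, llr, and_assoc,
    eq_comm]
  rfl

lemma llr_map_measurableEquiv_ae {α β : Type*} [MeasurableSpace α] [MeasurableSpace β]
    (T : α ≃ᵐ β) {γ ρ : Measure α} [SigmaFinite γ] [SigmaFinite ρ] (h : γ ≪ ρ) :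
    (fun p => llr (γ.map T) (ρ.map T) (T p)) =ᵐ[γ] llr γ ρ := by
  filter_upwards [h.ae_le (T.measurableEmbedding.rnDeriv_map γ ρ)] with p hp
  simp only [llr, hp]

lemma IsCoupling.map_prodCongr {μ ν : Measure X} {γ : Measure (X × X)} (hγ : IsCoupling μ ν γ)
    (e f : X ≃ᵐ Y) : IsCoupling (μ.map e) (ν.map f) (γ.map (e.prodCongr f)) := by
  constructor
  · rw [Measure.map_map measurable_fst (e.prodCongr f).measurable, ← hγ.1,
      Measure.map_map e.measurable measurable_fst]
    rfl
  · rw [Measure.map_map measurable_snd (e.prodCongr f).measurable, ← hγ.2,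
      Measure.map_map f.measurable measurable_snd]
    rfl

lemma map_prod_map_measurableEquiv (μ ν : Measure X) [SigmaFinite μ] [SigmaFinite ν]
    (e f : X ≃ᵐ Y) : (μ.map e).prod (ν.map f) = (μ.prod ν).map (e.prodCongr f) :=
  Measure.map_prod_map μ ν e.measurable f.measurable

variable {μ ν : Measure X} [SigmaFinite μ] [SigmaFinite ν] {γ : Measure (X × X)}

lemma IsFiniteKLCoupling.map_prodCongr (hγ : IsFiniteKLCoupling μ ν γ) (e f : X ≃ᵐ Y) :
    IsFiniteKLCoupling (μ.map e) (ν.map f) (γ.map (e.prodCongr f)) := by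
  obtain ⟨hprob, hcoup, hac, hint⟩ := hγ
  set T := e.prodCongr f
  rw [IsFiniteKLCoupling, map_prod_map_measurableEquiv]
  refine ⟨Measure.isProbabilityMeasure_map T.measurable.aemeasurable, hcoup.map_prodCongr e f,
    hac.map T.measurable, ?_⟩
  rw [integrable_map_equiv]
  exact hint.congr (llr_map_measurableEquiv_ae T hac).symm

lemma entCost_map_prodCongr (ε : ℝ) (c : Y → Y → ℝ) (hγ : IsFiniteKLCoupling μ ν γ)
    (e f : X ≃ᵐ Y) :
    entCost ε c (μ.map e) (ν.map f) (γ.map (e.prodCongr f))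
      = entCost ε (fun x y => c (e x) (f y)) μ ν γ := by
  have : IsProbabilityMeasure γ := hγ.1
  rw [entCost, entCost, map_prod_map_measurableEquiv, integral_map_equiv, integral_map_equiv,
    integral_congr_ae (llr_map_measurableEquiv_ae _ hγ.2.2.1)]
  rfl

theorem entOT_map_measurableEquiv (ε : ℝ) (c : Y → Y → ℝ) (e f : X ≃ᵐ Y) :
    entOT ε c (μ.map e) (ν.map f) = entOT ε (fun x y => c (e x) (f y)) μ ν := by
  have : SigmaFinite (μ.map e) := e.measurableEmbedding.sigmaFinite_map
  have : SigmaFinite (ν.map f) := f.measurableEmbedding.sigmaFinite_map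
  have hcouplings : {γ' | IsFiniteKLCoupling (μ.map e) (ν.map f) γ'}
      = (fun γ => γ.map (e.prodCongr f)) '' {γ | IsFiniteKLCoupling μ ν γ} := by
    refine subset_antisymm (fun γ' hγ' => ?_)
      (Set.image_subset_iff.2 fun γ hγ => hγ.map_prodCongr e f)
    refine ⟨γ'.map (e.prodCongr f).symm, ?_, (e.prodCongr f).map_map_symm⟩
    have h := hγ'.map_prodCongr e.symm f.symm
    rwa [MeasurableEquiv.map_symm_map, MeasurableEquiv.map_symm_map] at h
  rw [entOT_eq_sInf_image, entOT_eq_sInf_image, hcouplings, Set.image_image]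
  exact congrArg sInf (Set.image_congr fun γ hγ => entCost_map_prodCongr ε c hγ e f)

end MeasurableEquiv

section SeparableCost

variable {X : Type*} [MeasurableSpace X] {μ ν : Measure X}

lemma isFiniteKLCoupling_prod [IsProbabilityMeasure μ] [IsProbabilityMeasure ν] :
    IsFiniteKLCoupling μ ν (μ.prod ν) := by
  refine ⟨inferInstance, ⟨by simp, by simp⟩, Measure.AbsolutelyContinuous.rfl, ?_⟩
  refine (integrable_zero _ _ _).congr ?_
  filter_upwards [Measure.rnDeriv_self (μ.prod ν)] with p hp
  simp [llr, hp]

lemma entCost_nonneg [IsProbabilityMeasure μ] [IsProbabilityMeasure ν] {ε : ℝ} (hε : 0 ≤ ε)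
    {c : X → X → ℝ} (hc : ∀ x y, 0 ≤ c x y) {γ : Measure (X × X)}
    (hγ : IsFiniteKLCoupling μ ν γ) : 0 ≤ entCost ε c μ ν γ := by
  obtain ⟨hprob, -, hac, hint⟩ := hγ
  have hgibbs := InformationTheory.integral_llr_add_sub_measure_univ_nonneg hac hint
  simp only [probReal_univ, add_sub_cancel_right] at hgibbs
  exact add_nonneg (integral_nonneg fun p => hc p.1 p.2) (mul_nonneg hε hgibbs)

lemma entCost_add_separable (ε : ℝ) {c : X → X → ℝ} {φ ψ : X → ℝ} {γ : Measure (X × X)}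
    (hγ : IsCoupling μ ν γ) (hc : Integrable (fun p => c p.1 p.2) γ) (hφ : Integrable φ μ)
    (hψ : Integrable ψ ν) :
    entCost ε (fun x y => c x y + φ x + ψ y) μ ν γ
      = entCost ε c μ ν γ + (∫ x, φ x ∂μ + ∫ y, ψ y ∂ν) := by
  rw [← hγ.1] at hφ
  rw [← hγ.2] at hψ
  have hφ' : Integrable (fun p => φ p.1) γ := hφ.comp_measurable measurable_fst
  have hψ' : Integrable (fun p => ψ p.2) γ := hψ.comp_measurable measurable_snd
  have hφγ : ∫ x, φ x ∂μ = ∫ p, φ p.1 ∂γ := by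
    rw [← hγ.1, integral_map measurable_fst.aemeasurable hφ.1]
  have hψγ : ∫ y, ψ y ∂ν = ∫ p, ψ p.2 ∂γ := by
    rw [← hγ.2, integral_map measurable_snd.aemeasurable hψ.1]
  rw [entCost, entCost, integral_add (f := fun p => c p.1 p.2 + φ p.1) (hc.add hφ') hψ',
    integral_add hc hφ', hφγ, hψγ]
  ring

theorem entOT_add_separable [IsProbabilityMeasure μ] [IsProbabilityMeasure ν] {ε : ℝ}
    (hε : 0 ≤ ε) {c : X → X → ℝ} (hc : ∀ x y, 0 ≤ c x y)
    (hc_int : ∀ γ, IsCoupling μ ν γ → Integrable (fun p => c p.1 p.2) γ) {φ ψ : X → ℝ}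
    (hφ : Integrable φ μ) (hψ : Integrable ψ ν) :
    entOT ε (fun x y => c x y + φ x + ψ y) μ ν
      = entOT ε c μ ν + (∫ x, φ x ∂μ + ∫ y, ψ y ∂ν) := by
  set k := ∫ x, φ x ∂μ + ∫ y, ψ y ∂ν
  set S := entCost ε c μ ν '' {γ | IsFiniteKLCoupling μ ν γ}
  have hshift : entCost ε (fun x y => c x y + φ x + ψ y) μ ν '' {γ | IsFiniteKLCoupling μ ν γ}
      = (fun v => v + k) '' S := by
    rw [Set.image_image]
    exact Set.image_congr fun γ hγ => entCost_add_separable ε hγ.2.1 (hc_int γ hγ.2.1) hφ hψ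
  have hne : S.Nonempty := ⟨_, _, isFiniteKLCoupling_prod, rfl⟩
  have hbdd : BddBelow S := ⟨0, Set.forall_mem_image.2 fun γ hγ => entCost_nonneg hε hc hγ⟩
  rw [entOT_eq_sInf_image, entOT_eq_sInf_image, hshift]
  exact ((OrderIso.addRight k).map_csInf' hne hbdd).symm

end SeparableCost

lemma memLp_id_of_isCompact_null_compl {E : Type*} [NormedAddCommGroup E] [MeasurableSpace E]
    [OpensMeasurableSpace E] [SecondCountableTopology E] {μ : Measure E} [IsFiniteMeasure μ]
    (hμ : ∃ K, IsCompact K ∧ μ Kᶜ = 0) (p : ℝ≥0∞) : MemLp id p μ := by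
  obtain ⟨K, hK, hμK⟩ := hμ
  obtain ⟨C, hC⟩ := hK.isBounded.exists_norm_le
  have hae : ∀ᵐ x ∂μ, x ∈ K := measure_eq_zero_iff_ae_notMem.1 hμK |>.mono fun _ => not_not.1
  exact MemLp.of_bound aestronglyMeasurable_id C (hae.mono hC)

lemma IsCoupling.integrable_norm_sub_sq {E : Type*} [NormedAddCommGroup E] [MeasurableSpace E]
    [OpensMeasurableSpace E] [SecondCountableTopology E] {μ ν : Measure E}
    {γ : Measure (E × E)} (hγ : IsCoupling μ ν γ) (hμ : MemLp id 2 μ) (hν : MemLp id 2 ν) :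
    Integrable (fun p => ‖p.1 - p.2‖ ^ 2) γ := by
  rw [← hγ.1] at hμ
  rw [← hγ.2] at hν
  have h := (hμ.comp_of_map measurable_fst.aemeasurable).sub
    (hν.comp_of_map measurable_snd.aemeasurable)
  exact (show MemLp _ (2 : ℕ) γ from h).integrable_norm_pow two_ne_zero

section Quadratic

variable {d : ℕ}

local notation "X" => EuclideanSpace ℝ (Fin d)

theorem entOT_cQuad_map_sub {ε : ℝ} (hε : 0 ≤ ε) {μ ν : Measure X} [IsProbabilityMeasure μ]
    [IsProbabilityMeasure ν] (hμ : MemLp id 2 μ) (hν : MemLp id 2 ν) (a b : X) :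
    entOT ε cQuad (μ.map (· - a)) (ν.map (· - b))
      = entOT ε cQuad μ ν + (‖a - b‖ ^ 2 - 2 * ⟪meanOf μ - meanOf ν, a - b⟫) := by
  obtain ⟨w, hw⟩ : ∃ w, w = a - b := ⟨_, rfl⟩
  have hcost : (fun x y : X => cQuad (x - a) (y - b))
      = fun x y => cQuad x y + (‖w‖ ^ 2 - 2 * ⟪w, x⟫) + 2 * ⟪w, y⟫ := by
    ext x y
    rw [cQuad, cQuad, show x - a - (y - b) = x - y - w by rw [hw]; abel, norm_sub_sq_real,
      inner_sub_left, real_inner_comm x, real_inner_comm y]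
    ring
  have hμ1 : Integrable (fun x : X => x) μ := hμ.integrable one_le_two
  have hν1 : Integrable (fun x : X => x) ν := hν.integrable one_le_two
  have hφ : Integrable (fun x : X => ‖w‖ ^ 2 - 2 * ⟪w, x⟫) μ :=
    (integrable_const _).sub ((hμ1.const_inner w).const_mul 2)
  have hψ : Integrable (fun y : X => 2 * ⟪w, y⟫) ν := (hν1.const_inner w).const_mul 2
  calc entOT ε cQuad (μ.map (· - a)) (ν.map (· - b))
      = entOT ε (fun x y => cQuad (x - a) (y - b)) μ ν :=
        entOT_map_measurableEquiv ε cQuad (.subRight a) (.subRight b)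
    _ = entOT ε cQuad μ ν + ((‖w‖ ^ 2 - 2 * ⟪w, meanOf μ⟫) + 2 * ⟪w, meanOf ν⟫) := by
        rw [hcost, entOT_add_separable (c := cQuad) hε (fun x y => sq_nonneg _)
          (fun γ hγ => hγ.integrable_norm_sub_sq hμ hν) hφ hψ, integral_sub (integrable_const _)
          ((hμ1.const_inner w).const_mul 2), integral_const, integral_const_mul,
          integral_const_mul, integral_inner hμ1, integral_inner hν1]
        simp [meanOf]
    _ = entOT ε cQuad μ ν + (‖a - b‖ ^ 2 - 2 * ⟪meanOf μ - meanOf ν, a - b⟫) := by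
        rw [← hw, inner_sub_left, real_inner_comm w, real_inner_comm w]
        ring

end Quadratic

/-- **Decoupling of the mean in the Sinkhorn divergence with quadratic cost.**
For compactly supported probability measures `μ₀, μ₁` on `ℝ^d` with means `m₀, m₁` and
centered versions `μ̄₀, μ̄₁`: `S_ε(μ₀,μ₁) = ‖m₁−m₀‖² + S_ε(μ̄₀,μ̄₁)`. -/
theorem stmt11 (d : ℕ) (ε : ℝ) (hε : 0 < ε)
    (μ₀ μ₁ : Measure (EuclideanSpace ℝ (Fin d)))
    [IsProbabilityMeasure μ₀] [IsProbabilityMeasure μ₁]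
    (h₀ : ∃ K, IsCompact K ∧ μ₀ Kᶜ = 0) (h₁ : ∃ K, IsCompact K ∧ μ₁ Kᶜ = 0) :
    sinkhorn ε cQuad μ₀ μ₁
      = ‖meanOf μ₁ - meanOf μ₀‖ ^ 2 + sinkhorn ε cQuad (centered μ₀) (centered μ₁) := by
  have hμ₀ := memLp_id_of_isCompact_null_compl h₀ 2
  have hμ₁ := memLp_id_of_isCompact_null_compl h₁ 2
  have cross := entOT_cQuad_map_sub hε.le hμ₀ hμ₁ (meanOf μ₀) (meanOf μ₁)
  have self₀ := entOT_cQuad_map_sub hε.le hμ₀ hμ₀ (meanOf μ₀) (meanOf μ₀)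
  have self₁ := entOT_cQuad_map_sub hε.le hμ₁ hμ₁ (meanOf μ₁) (meanOf μ₁)
  rw [sinkhorn, sinkhorn, centered, centered, cross, self₀, self₁, real_inner_self_eq_norm_sq,
    norm_sub_rev]
  simp only [sub_self, norm_zero, inner_zero_left]
  ring
end
end

section
/- Let X be a compact metric space, ε > 0, and c : X × X → [0,∞) continuous, symmetric and nonnegative such that the kernel k_c(x,y) = exp(−c(x,y)/ε) is positive semidefinite, i.e. ∬ k_c(x,y) dσ(x) dσ(y) ≥ 0 for every finite signed Borel measure σ on X. If μ is a Borel probability measure on X and f : X → ℝ is a continuous function satisfying the symmetric Schrödinger fixed-point equation ∫_X exp((f(x)+f(y)−c(x,y))/ε) dμ(x) = 1 for every y ∈ X, then f(x) ≥ 0 for all x ∈ X. In other words, the entropic self-transport potential of any probability measure with respect to any nonnegative cost inducing a positive semidefinite kernel is nonnegative. -/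
open MeasureTheory Real
open scoped ENNReal

/-!
Put `g = exp (f / ε)` and `k = exp (-c / ε)`; the fixed-point equation says
`∫ g x k x y dμ(x) = 1 / g y`. Test positive semidefiniteness of `k` on `σ₁ - σ₂` with
`σ₁ = g • μ` and `σ₂ = t • δ_{x₀}`: the fixed-point equation evaluates the four double integrals,
giving `1 - 2 t / g x₀ + t² k x₀ x₀ ≥ 0` for all `t ≥ 0`. The optimal `t` gives
`(1 / g x₀)² ≤ k x₀ x₀ ≤ 1`, that is `g x₀ ≥ 1` and `f x₀ ≥ 0`.
-/

section

variable {X : Type*} [MeasurableSpace X]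

/-- `∬ k d(σ₁ - σ₂) d(σ₁ - σ₂) ≥ 0`, expanded so that only finite measures occur. -/
def IsPosSemidefKernel (k : X → X → ℝ) : Prop :=
  ∀ σ₁ σ₂ : Measure X, IsFiniteMeasure σ₁ → IsFiniteMeasure σ₂ →
    0 ≤ (∫ x, ∫ y, k x y ∂σ₁ ∂σ₁) - (∫ x, ∫ y, k x y ∂σ₂ ∂σ₁)
      - (∫ x, ∫ y, k x y ∂σ₁ ∂σ₂) + ∫ x, ∫ y, k x y ∂σ₂ ∂σ₂

lemma sq_le_of_forall_nonneg_quadratic {B C : ℝ} (hB : 0 ≤ B) (hC : 0 < C)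
    (h : ∀ t, 0 ≤ t → 0 ≤ 1 - 2 * B * t + C * t ^ 2) : B ^ 2 ≤ C := by
  have hmin := h (B / C) (div_nonneg hB hC.le)
  have hval : 1 - 2 * B * (B / C) + C * (B / C) ^ 2 = 1 - B ^ 2 / C := by
    field_simp; ring
  rwa [hval, sub_nonneg, div_le_one hC] at hmin

lemma integral_withDensity_ofReal {μ : Measure X} {g : X → ℝ} (hg : Measurable g)
    (hg_nonneg : ∀ x, 0 ≤ g x) (h : X → ℝ) :
    ∫ x, h x ∂μ.withDensity (fun x => ENNReal.ofReal (g x)) = ∫ x, g x * h x ∂μ := by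
  rw [integral_withDensity_eq_integral_toReal_smul (f := fun x => ENNReal.ofReal (g x))
    (ENNReal.measurable_ofReal.comp hg) (.of_forall fun _ => ENNReal.ofReal_lt_top)]
  simp only [ENNReal.toReal_ofReal (hg_nonneg _), smul_eq_mul]

lemma integral_smul_dirac [MeasurableSingletonClass X] {t : ℝ} (ht : 0 ≤ t) (x₀ : X)
    (h : X → ℝ) : ∫ x, h x ∂(ENNReal.ofReal t • Measure.dirac x₀) = t * h x₀ := by
  rw [integral_smul_measure, integral_dirac, smul_eq_mul, ENNReal.toReal_ofReal ht]

variable [MeasurableSingletonClass X] {k : X → X → ℝ} {μ : Measure X} [IsProbabilityMeasure μ]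
  {g : X → ℝ}

lemma IsPosSemidefKernel.quadratic_nonneg_of_integral_mul_eq_inv (hk : IsPosSemidefKernel k)
    (hk_symm : ∀ x y, k x y = k y x) (hg_meas : Measurable g) (hg_pos : ∀ x, 0 < g x)
    (hg_int : Integrable g μ) (hfix : ∀ y, ∫ x, g x * k x y ∂μ = (g y)⁻¹) (x₀ : X)
    {t : ℝ} (ht : 0 ≤ t) : 0 ≤ 1 - 2 * (g x₀)⁻¹ * t + k x₀ x₀ * t ^ 2 := by
  have hg_nonneg x := (hg_pos x).le
  set σ₁ := μ.withDensity (fun x => ENNReal.ofReal (g x))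
  set σ₂ := ENNReal.ofReal t • Measure.dirac x₀
  have hσ₁ : IsFiniteMeasure σ₁ := isFiniteMeasure_withDensity_ofReal hg_int.hasFiniteIntegral
  have hσ₂ : IsFiniteMeasure σ₂ := by
    constructor; simp [σ₂, ENNReal.ofReal_lt_top]
  have hinner x : ∫ y, k x y ∂σ₁ = (g x)⁻¹ := by
    simp only [σ₁, integral_withDensity_ofReal hg_meas hg_nonneg, hk_symm x, hfix]
  have h₁₁ : ∫ x, ∫ y, k x y ∂σ₁ ∂σ₁ = 1 := by
    simp only [hinner, σ₁, integral_withDensity_ofReal hg_meas hg_nonneg,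
      mul_inv_cancel₀ (hg_pos _).ne', integral_const, probReal_univ, smul_eq_mul, mul_one]
  have h₂₁ : ∫ x, ∫ y, k x y ∂σ₂ ∂σ₁ = t * (g x₀)⁻¹ := by
    simp only [σ₁, σ₂, integral_smul_dirac ht, integral_withDensity_ofReal hg_meas hg_nonneg,
      mul_left_comm _ t, integral_const_mul, hfix]
  have h₁₂ : ∫ x, ∫ y, k x y ∂σ₁ ∂σ₂ = t * (g x₀)⁻¹ := by
    rw [integral_smul_dirac ht, hinner]
  have h₂₂ : ∫ x, ∫ y, k x y ∂σ₂ ∂σ₂ = t * (t * k x₀ x₀) := by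
    simp only [σ₂, integral_smul_dirac ht]
  have := hk σ₁ σ₂ hσ₁ hσ₂
  rw [h₁₁, h₂₁, h₁₂, h₂₂] at this
  linarith

lemma IsPosSemidefKernel.one_le_of_integral_mul_eq_inv (hk : IsPosSemidefKernel k)
    (hk_symm : ∀ x y, k x y = k y x) (hg_meas : Measurable g) (hg_pos : ∀ x, 0 < g x)
    (hg_int : Integrable g μ) (hfix : ∀ y, ∫ x, g x * k x y ∂μ = (g y)⁻¹) {x₀ : X}
    (hk₀ : 0 < k x₀ x₀) (hk₀_le : k x₀ x₀ ≤ 1) : 1 ≤ g x₀ := by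
  have hsq : (g x₀)⁻¹ ^ 2 ≤ k x₀ x₀ :=
    sq_le_of_forall_nonneg_quadratic (inv_nonneg.2 (hg_pos x₀).le) hk₀ fun _ ht =>
      hk.quadratic_nonneg_of_integral_mul_eq_inv hk_symm hg_meas hg_pos hg_int hfix x₀ ht
  have hinv : (g x₀)⁻¹ ≤ 1 := (sq_le_one_iff₀ (inv_nonneg.2 (hg_pos x₀).le)).1 (hsq.trans hk₀_le)
  exact (inv_le_one₀ (hg_pos x₀)).1 hinv

end

theorem stmt15_general {X : Type*} [MetricSpace X] [CompactSpace X]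
    [MeasurableSpace X] [BorelSpace X]
    (ε : ℝ) (hε : 0 < ε) (c : X → X → ℝ)
    (hc_symm : ∀ x y, c x y = c y x) (hc_nonneg : ∀ x y, 0 ≤ c x y)
    (hpsd : ∀ σ₁ σ₂ : Measure X, IsFiniteMeasure σ₁ → IsFiniteMeasure σ₂ →
      0 ≤ (∫ x, ∫ y, Real.exp (-c x y / ε) ∂σ₁ ∂σ₁)
          - (∫ x, ∫ y, Real.exp (-c x y / ε) ∂σ₂ ∂σ₁)
          - (∫ x, ∫ y, Real.exp (-c x y / ε) ∂σ₁ ∂σ₂)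
          + ∫ x, ∫ y, Real.exp (-c x y / ε) ∂σ₂ ∂σ₂)
    (μ : Measure X) [IsProbabilityMeasure μ]
    (f : X → ℝ) (hf_cont : Continuous f)
    (hfp : ∀ y, ∫ x, Real.exp ((f x + f y - c x y) / ε) ∂μ = 1) :
    ∀ x, 0 ≤ f x := by
  intro x₀
  have hg_cont : Continuous fun x => exp (f x / ε) := by fun_prop
  have hfix y : ∫ x, exp (f x / ε) * exp (-c x y / ε) ∂μ = (exp (f y / ε))⁻¹ := by
    have hsplit x : exp ((f x + f y - c x y) / ε)
        = exp (f x / ε) * exp (-c x y / ε) * exp (f y / ε) := by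
      rw [← exp_add, ← exp_add]; ring_nf
    have := hfp y
    simp only [hsplit, integral_mul_const] at this
    exact eq_inv_of_mul_eq_one_left this
  have hk₀_le : exp (-c x₀ x₀ / ε) ≤ 1 :=
    exp_le_one_iff.2 (div_nonpos_of_nonpos_of_nonneg (neg_nonpos.2 (hc_nonneg x₀ x₀)) hε.le)
  have hg₀ : 1 ≤ exp (f x₀ / ε) :=
    IsPosSemidefKernel.one_le_of_integral_mul_eq_inv (k := fun x y => exp (-c x y / ε)) hpsd
      (fun x y => by rw [hc_symm]) hg_cont.measurable (fun _ => exp_pos _)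
      (hg_cont.integrable_of_hasCompactSupport (isClosed_tsupport _).isCompact) hfix
      (exp_pos _) hk₀_le
  simpa using (le_div_iff₀ hε).1 (one_le_exp_iff.1 hg₀)

/-- **Nonnegativity of the entropic self-transport potential.** Let `X` be a compact
metric space, `ε > 0`, and `c` a continuous, symmetric, nonnegative cost whose kernel
`k_c(x,y) = exp(−c(x,y)/ε)` is positive semidefinite in the sense that
`∬ k_c dσ dσ ≥ 0` for every finite signed Borel measure `σ` (equivalently, for every
difference `σ = σ₁ − σ₂` of finite Borel measures). If `μ` is a Borel probability
measure and the continuous function `f` satisfies the symmetric Schrödinger fixed-point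
equation `∫ exp((f(x)+f(y)−c(x,y))/ε) dμ(x) = 1` for all `y`, then `f ≥ 0`. -/
theorem stmt15 {X : Type*} [MetricSpace X] [CompactSpace X]
    [MeasurableSpace X] [BorelSpace X]
    (ε : ℝ) (hε : 0 < ε) (c : X → X → ℝ)
    (hc_cont : Continuous fun p : X × X => c p.1 p.2)
    (hc_symm : ∀ x y, c x y = c y x) (hc_nonneg : ∀ x y, 0 ≤ c x y)
    (hpsd : ∀ σ₁ σ₂ : Measure X, IsFiniteMeasure σ₁ → IsFiniteMeasure σ₂ →
      0 ≤ (∫ x, ∫ y, Real.exp (-c x y / ε) ∂σ₁ ∂σ₁)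
          - (∫ x, ∫ y, Real.exp (-c x y / ε) ∂σ₂ ∂σ₁)
          - (∫ x, ∫ y, Real.exp (-c x y / ε) ∂σ₁ ∂σ₂)
          + ∫ x, ∫ y, Real.exp (-c x y / ε) ∂σ₂ ∂σ₂)
    (μ : Measure X) [IsProbabilityMeasure μ]
    (f : X → ℝ) (hf_cont : Continuous f)
    (hfp : ∀ y, ∫ x, Real.exp ((f x + f y - c x y) / ε) ∂μ = 1) :
    ∀ x, 0 ≤ f x :=
  stmt15_general ε hε c hc_symm hc_nonneg hpsd μ f hf_cont hfp
end
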